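/- Every CL-class of valuations is also a CL-klass, but not vice versa: the class C*_CL ∪ {ṽ'_CL}, with ṽ'_CL(a) = f iff ⊨_CL ¬a, is a CL-klass that is not a CL-class. -/

import Mathlib

/-- Sentences generated from a countably infinite set of atoms by `∧`, `∨`, `¬`. -/
inductive Sentence : Type where
  | atom : ℕ → Sentence
  | conj : Sentence → Sentence → Sentence
  | disj : Sentence → Sentence → Sentence
  | neg  : Sentence → Sentence

/-- A (bivalent) valuation: `true` = t, `false` = f. -/
abbrev SentVal : Type := Sentence → Bool

/-- The class `C*_CL` of all classical (truth-table) valuations. -/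
def CstarCL : Set SentVal :=
  { v | (∀ a b, (v (Sentence.conj a b) = true ↔ (v a = true ∧ v b = true))) ∧
        (∀ a b, (v (Sentence.disj a b) = false ↔ (v a = false ∧ v b = false))) ∧
        (∀ a, (v (Sentence.neg a) = true ↔ v a = false)) }

/-- Classical consequence `Γ ⊨_CL a`. -/
def CLconseq (Γ : Set Sentence) (a : Sentence) : Prop :=
  ∀ v ∈ CstarCL, (∀ γ ∈ Γ, v γ = true) → v a = true

/-- `⊨_CL a`: `a` is a classical tautology. -/
def CLvalid (a : Sentence) : Prop := ∀ v ∈ CstarCL, v a = true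

/-- A CL-class: any class of valuations determining exactly `⊨_CL`. -/
def IsCLClass (C : Set SentVal) : Prop :=
  ∀ (Γ : Set Sentence) (a : Sentence),
    CLconseq Γ a ↔ (∀ v ∈ C, (∀ γ ∈ Γ, v γ = true) → v a = true)

/-- The non-standard valuation `ṽ'_CL`: `ṽ'_CL a = f` iff `a` is a classical
falsehood (i.e. `⊨_CL ¬a`), and `ṽ'_CL a = t` otherwise. -/
noncomputable def tildeVCL' : SentVal :=
  fun a => !(@decide (CLvalid (Sentence.neg a)) (Classical.propDecidable _))

/-- The conjunction of the members of a nonempty finite list of sentences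
(the value on `[]` is an irrelevant dummy). -/
def conjList : List Sentence → Sentence
  | [] => Sentence.atom 0
  | [a] => a
  | a :: b :: l => Sentence.conj a (conjList (b :: l))

/-- A CL-klass: for finite nonempty premise sets, validity is explicated via
the truth of the conjunction of the premises. -/
def IsCLKlass (K : Set SentVal) : Prop :=
  ∀ (Γ : List Sentence), Γ ≠ [] → ∀ a : Sentence,
    (CLconseq {γ | γ ∈ Γ} a ↔ (∀ v ∈ K, v (conjList Γ) = true → v a = true))

lemma conjList_true {v : SentVal} (hv : v ∈ CstarCL) :
    ∀ l : List Sentence, l ≠ [] → (v (conjList l) = true ↔ ∀ γ ∈ l, v γ = true) := by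
  intro l
  induction l with
  | nil => intro h; exact absurd rfl h
  | cons a l ih =>
    intro _
    cases l with
    | nil => simp [conjList]
    | cons b l =>
      rw [conjList, hv.1, ih (by simp)]
      simp

lemma conseq_conjList (l : List Sentence) (hl : l ≠ []) (a : Sentence) :
    CLconseq {γ | γ ∈ l} a ↔ CLconseq {conjList l} a := by
  constructor
  · intro h v hv hc
    exact h v hv (fun γ hγ => ((conjList_true hv l hl).1 (hc _ rfl)) γ hγ)
  · intro h v hv hc
    exact h v hv (fun γ hγ => by
      rw [Set.mem_singleton_iff] at hγ; subst hγ
      exact (conjList_true hv l hl).2 hc)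

lemma tilde_true_iff (a : Sentence) :
    tildeVCL' a = true ↔ ¬ CLvalid (Sentence.neg a) := by
  simp [tildeVCL']

/-- Standard recursive evaluation from an atomic assignment. -/
def evalS (f : ℕ → Bool) : Sentence → Bool
  | .atom n => f n
  | .conj a b => evalS f a && evalS f b
  | .disj a b => evalS f a || evalS f b
  | .neg a => !(evalS f a)

lemma evalS_mem (f : ℕ → Bool) : evalS f ∈ CstarCL := by
  refine ⟨fun a b => ?_, fun a b => ?_, fun a => ?_⟩ <;> simp [evalS]

/-- every CL-class is a CL-klass, but not vice versa:
`C*_CL ∪ {ṽ'_CL}` is a CL-klass that is not a CL-class. -/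
theorem stmt_18 :
    (∀ C : Set SentVal, IsCLClass C → IsCLKlass C) ∧
    IsCLKlass (CstarCL ∪ {tildeVCL'}) ∧
    ¬ IsCLClass (CstarCL ∪ {tildeVCL'}) := by
  have part1 : ∀ C : Set SentVal, IsCLClass C → IsCLKlass C := by
    intro C hC l hl a
    rw [conseq_conjList l hl a, hC {conjList l} a]
    constructor
    · intro h v hv hc; exact h v hv (fun γ hγ => by rw [Set.mem_singleton_iff] at hγ; subst hγ; exact hc)
    · intro h v hv hc
      exact h v hv (hc _ rfl)
  refine ⟨part1, ?_, ?_⟩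
  · intro l hl a
    constructor
    · intro h v hv hc
      rcases hv with hv | hv
      · exact h v hv (fun γ hγ => ((conjList_true hv l hl).1 hc) γ hγ)
      · rw [Set.mem_singleton_iff] at hv; subst hv
        rw [tilde_true_iff] at hc ⊢
        intro hval
        apply hc
        intro v hv
        rw [hv.2.2]
        by_contra hne
        have hvt : v (conjList l) = true := by
          cases hb : v (conjList l) with
          | false => exact absurd hb hne
          | true => rfl
        have := h v hv (fun γ hγ => ((conjList_true hv l hl).1 hvt) γ hγ)
        have h2 := (hv.2.2 a).1 (hval v hv)
        rw [this] at h2; exact absurd h2 (by simp)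
    · intro h v hv hp
      exact h v (Or.inl hv) ((conjList_true hv l hl).2 hp)
  · intro hC
    set p := Sentence.atom 0
    set c := Sentence.conj (Sentence.atom 1) (Sentence.neg (Sentence.atom 1))
    have hcon : CLconseq {p, Sentence.neg p} c := by
      intro v hv hp
      exfalso
      have h1 := hp p (by simp)
      have h2 := (hv.2.2 p).1 (hp (Sentence.neg p) (by simp))
      rw [h1] at h2; exact absurd h2 (by simp)
    have := (hC {p, Sentence.neg p} c).1 hcon tildeVCL' (Or.inr rfl) ?_
    · -- tildeVCL' c = true leads to contradiction since CLvalid (neg c)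
      rw [tilde_true_iff] at this
      apply this
      intro v hv
      rw [hv.2.2]
      by_contra hne
      have hct : v c = true := by
        cases hb : v c with
        | false => exact absurd hb hne
        | true => rfl
      have h1 := (hv.1 _ _).1 hct
      have h2 := (hv.2.2 _).1 h1.2
      rw [h1.1] at h2; exact absurd h2 (by simp)
    · -- tildeVCL' satisfies the premises
      intro γ hγ
      rcases hγ with hγ | hγ
      · subst hγ
        rw [tilde_true_iff]
        intro hval
        have := hval (evalS (fun _ => true)) (evalS_mem _)
        simp [evalS, p] at this
      · rw [Set.mem_singleton_iff] at hγ; subst hγ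
        rw [tilde_true_iff]
        intro hval
        have := hval (evalS (fun _ => false)) (evalS_mem _)
        simp [evalS, p] at this
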